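/- arXiv:1810.09795 — 2 statements merged into one kernel-verified Lean document; each statement's English description precedes it below -/
import Mathlib

section
/- Let N be a binary phylogenetic network containing a triangle on nodes t, s, r, i.e., edges (t,s), (t,r), (s,r), where s is a split node (indegree 1, outdegree 2) and r is a reticulation (indegree 2, outdegree 1). Then the directed graph N' obtained from N by deleting the edge (s,r) and adding the edge (r,s) is again a binary phylogenetic network (in particular, N' is acyclic, has no parallel edges, and every node has one of the allowed degree types). -/
/-!
Reversing `(s, r)` changes degrees only at `s` and `r`: `s` trades an out-edge for an in-edge and
`r` an in-edge for an out-edge, so the split node `s` becomes a reticulation and the reticulation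
`r` a split node, while the root and the leaves keep their degrees. A cycle created by the reversal
must use `(r, s)`, so it yields a path from `s` to `r` avoiding `(s, r)`; such a path enters `r`
through its other parent `t`, and together with the edge `(t, s)` it closes a cycle in `N`.
-/

noncomputable section

namespace Phylo

/-- In-degree of a vertex in a digraph given by an edge relation. -/
def indeg {V : Type} (E : V → V → Prop) (v : V) : ℕ := Nat.card {u // E u v}

/-- Out-degree of a vertex in a digraph given by an edge relation. -/
def outdeg {V : Type} (E : V → V → Prop) (v : V) : ℕ := Nat.card {w // E v w}

def IsRoot {V : Type} (E : V → V → Prop) (v : V) : Prop := indeg E v = 0 ∧ outdeg E v = 1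
def IsLeafNode {V : Type} (E : V → V → Prop) (v : V) : Prop := indeg E v = 1 ∧ outdeg E v = 0
def IsSplit {V : Type} (E : V → V → Prop) (v : V) : Prop := indeg E v = 1 ∧ outdeg E v = 2
def IsRetic {V : Type} (E : V → V → Prop) (v : V) : Prop := indeg E v = 2 ∧ outdeg E v = 1

/-- A directed graph is acyclic if no vertex lies on a directed cycle. -/
def Acyclic {V : Type} (E : V → V → Prop) : Prop := ∀ v, ¬ Relation.TransGen E v v

/-- `(V, E)` together with the leaf-labelling `lab : X → V` is a binary phylogenetic
network on leaf set `X`: an acyclic digraph with a unique root (indeg 0, outdeg 1),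
leaves (indeg 1, outdeg 0) bijectively labelled by `X`, and all other nodes split
nodes (indeg 1, outdeg 2) or reticulations (indeg 2, outdeg 1). -/
structure IsPhyloNet {V X : Type} [Fintype V] (E : V → V → Prop) (lab : X → V) : Prop where
  acyclic : Acyclic E
  root_unique : ∃! v, IsRoot E v
  lab_inj : Function.Injective lab
  leaf_iff : ∀ v, IsLeafNode E v ↔ v ∈ Set.range lab
  node_types : ∀ v, IsRoot E v ∨ IsLeafNode E v ∨ IsSplit E v ∨ IsRetic E v

/-- The reticulation number of a digraph. -/
def reticCount {V : Type} (E : V → V → Prop) : ℕ := Nat.card {v // IsRetic E v}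

/-- Labelled isomorphism of leaf-labelled digraphs. -/
def LabIso {V V' X : Type} (E : V → V → Prop) (lab : X → V)
    (E' : V' → V' → Prop) (lab' : X → V') : Prop :=
  ∃ φ : V ≃ V', (∀ a b, E a b ↔ E' (φ a) (φ b)) ∧ ∀ x, φ (lab x) = lab' x

/-- Result of the head move of the edge `(u,v)` to the edge `(s,t)`, where `p` is the
other parent of the reticulation `v` and `c` its child.  The former head `v` is reused
as the node `v'` subdividing `(s,t)`: we delete `(u,v), (p,v), (v,c), (s,t)`, add
`(p,c)` (suppressing `v`), `(s,v), (v,t)` (subdividing `(s,t)` by `v' = v`), and the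
new edge `(u,v') = (u,v)`. -/
def headMoveEdges {V : Type} (E : V → V → Prop) (u v p c s t : V) : V → V → Prop :=
  fun a b =>
    (E a b ∧ (a, b) ≠ (p, v) ∧ (a, b) ≠ (v, c) ∧ (a, b) ≠ (s, t) ∧ (a, b) ≠ (u, v))
      ∨ (a, b) = (p, c) ∨ (a, b) = (s, v) ∨ (a, b) = (v, t) ∨ (a, b) = (u, v)

/-- Result of the tail move of the edge `(u,v)` to the edge `(s,t)`, where `p` is the
parent of the split node `u` and `c` its other child; `u` is reused as the node `u'`
subdividing `(s,t)`. -/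
def tailMoveEdges {V : Type} (E : V → V → Prop) (u v p c s t : V) : V → V → Prop :=
  fun a b =>
    (E a b ∧ (a, b) ≠ (p, u) ∧ (a, b) ≠ (u, c) ∧ (a, b) ≠ (s, t) ∧ (a, b) ≠ (u, v))
      ∨ (a, b) = (p, c) ∨ (a, b) = (s, u) ∨ (a, b) = (u, t) ∨ (a, b) = (u, v)

/-- A leaf-labelled digraph on a finite vertex set, the carrier for phylogenetic
networks on leaf set `X`. -/
structure Net (X : Type) where
  V : Type
  fin : Fintype V
  E : V → V → Prop
  lab : X → V

attribute [instance] Net.fin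

/-- `N` is a binary phylogenetic network. -/
def Net.valid {X : Type} (N : Net X) : Prop := IsPhyloNet N.E N.lab

/-- Labelled isomorphism of two leaf-labelled digraphs. -/
def NetIso {X : Type} (N N' : Net X) : Prop := LabIso N.E N.lab N'.E N'.lab

/-- `N'` is obtained from `N` by one valid head move. -/
def HeadMoveStep {X : Type} (N N' : Net X) : Prop :=
  N.valid ∧ N'.valid ∧ ∃ u v p c s t : N.V,
    N.E u v ∧ N.E p v ∧ p ≠ u ∧ N.E v c ∧ N.E s t ∧
    LabIso (headMoveEdges N.E u v p c s t) N.lab N'.E N'.lab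

/-- `N'` is obtained from `N` by one valid tail move. -/
def TailMoveStep {X : Type} (N N' : Net X) : Prop :=
  N.valid ∧ N'.valid ∧ ∃ u v p c s t : N.V,
    N.E u v ∧ N.E p u ∧ N.E u c ∧ c ≠ v ∧ N.E s t ∧
    LabIso (tailMoveEdges N.E u v p c s t) N.lab N'.E N'.lab

/-- The digraph obtained by subdividing the edge `(s,t)` with a fresh node (`none`). -/
def subdivEdge {V : Type} (E : V → V → Prop) (s t : V) : Option V → Option V → Prop
  | some a, some b => E a b ∧ (a, b) ≠ (s, t)
  | some a, none => a = s
  | none, some b => b = t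
  | none, none => False

/-- `N'` is obtained from `N` by one valid distance-`d` head move: after subdividing
the target edge `(s,t)` with a new node `v'`, a shortest path from the old head `v`
to `v'` in the underlying undirected graph has length at most `d + 1`. -/
def HeadMoveStepD {X : Type} (d : ℕ) (N N' : Net X) : Prop :=
  N.valid ∧ N'.valid ∧ ∃ u v p c s t : N.V,
    N.E u v ∧ N.E p v ∧ p ≠ u ∧ N.E v c ∧ N.E s t ∧
    (SimpleGraph.fromRel (subdivEdge N.E s t)).dist (some v) none ≤ d + 1 ∧
    LabIso (headMoveEdges N.E u v p c s t) N.lab N'.E N'.lab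

/-- `N` and `N'` are connected by a finite sequence of `R`-moves (up to labelled
isomorphism, i.e. renaming of vertices). -/
def ConnectedBy {X : Type} (R : Net X → Net X → Prop) (N N' : Net X) : Prop :=
  Relation.ReflTransGen (fun A B => R A B ∨ NetIso A B) N N'

/-- `N'` can be reached from `N` by at most `n` `R`-moves (up to labelled isomorphism). -/
def stepsLE {X : Type} (R : Net X → Net X → Prop) : ℕ → Net X → Net X → Prop
  | 0, N, N' => NetIso N N'
  | n + 1, N, N' => stepsLE R n N N' ∨ ∃ M, R N M ∧ stepsLE R n M N'

/-- `(V, E)` is a subdivision of `(W, F)` via the injection `φ`: every vertex outside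
the image of `φ` is a redundant (indeg 1, outdeg 1) node, and `F a b` holds iff there
is an `E`-path from `φ a` to `φ b` all of whose internal vertices avoid the image. -/
def IsSubdivision {W V : Type} (F : W → W → Prop) (E : V → V → Prop) (φ : W → V) : Prop :=
  Function.Injective φ ∧
  (∀ v, v ∉ Set.range φ → indeg E v = 1 ∧ outdeg E v = 1) ∧
  (∀ a b, F a b ↔ ∃ l : List V,
      List.Chain E (φ a) (l ++ [φ b]) ∧ ∀ x ∈ l, x ∉ Set.range φ)

/-- A rooted phylogenetic tree on `X`: a phylogenetic network with no reticulations. -/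
def IsTree {X : Type} (T : Net X) : Prop := T.valid ∧ reticCount T.E = 0

/-- The tree `T` is embedded in `N`: some `X`-labelled subgraph of `N` is a
subdivision of `T`. -/
def EmbeddedTree {X : Type} (T N : Net X) : Prop :=
  IsTree T ∧ ∃ (E' : N.V → N.V → Prop) (φ : T.V → N.V),
    (∀ a b, E' a b → N.E a b) ∧ IsSubdivision T.E E' φ ∧ ∀ x, φ (T.lab x) = N.lab x

/-- The digraph contains a triangle `t, s, r` with edges `(t,s), (t,r), (s,r)`. -/
def HasTriangle {V : Type} (E : V → V → Prop) : Prop :=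
  ∃ t s r, E t s ∧ E t r ∧ E s r

/-- The network has `k` reticulations at the top, with nodes `c` (child of the root),
`a i`, `b i` for `1 ≤ i ≤ k`. -/
def ReticsAtTop {V : Type} (E : V → V → Prop) (k : ℕ) (c : V) (a b : ℕ → V) : Prop :=
  (∃ ρ, IsRoot E ρ ∧ E ρ c) ∧ E c (a 1) ∧ E c (b 1) ∧
  (∀ i, 1 ≤ i → i ≤ k → E (a i) (b i) ∧ IsSplit E (a i) ∧ IsRetic E (b i)) ∧
  (∀ i, 1 ≤ i → i < k →
    ((E (a i) (a (i + 1)) ∧ E (b i) (b (i + 1))) ∨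
     (E (a i) (b (i + 1)) ∧ E (b i) (a (i + 1)))))

/-- The network has `k` reticulations neatly at the top. -/
def NeatlyAtTop {V : Type} (E : V → V → Prop) (k : ℕ) (c : V) (a b : ℕ → V) : Prop :=
  (∃ ρ, IsRoot E ρ ∧ E ρ c) ∧ E c (a 1) ∧ E c (b 1) ∧
  (∀ i, 1 ≤ i → i ≤ k → E (a i) (b i) ∧ IsSplit E (a i) ∧ IsRetic E (b i)) ∧
  (∀ i, 1 ≤ i → i < k → E (a i) (a (i + 1)) ∧ E (b i) (b (i + 1)))

variable {V X : Type} {E E' : V → V → Prop}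

theorem Acyclic.irrefl (hE : Acyclic E) (a : V) : ¬ E a a :=
  fun h => hE a (.single h)

theorem Acyclic.ne (hE : Acyclic E) {a b : V} (h : E a b) : a ≠ b := by
  rintro rfl
  exact hE.irrefl a h

theorem Acyclic.asymm (hE : Acyclic E) {a b : V} (h : E a b) : ¬ E b a :=
  fun h' => hE a (.tail (.single h) h')

theorem indeg_eq_ncard (E : V → V → Prop) (v : V) : indeg E v = {u | E u v}.ncard :=
  Nat.card_coe_set_eq _

theorem outdeg_eq_ncard (E : V → V → Prop) (v : V) : outdeg E v = {w | E v w}.ncard :=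
  Nat.card_coe_set_eq _

theorem eq_or_eq_of_indeg_eq_two {v a b u : V} (h : indeg E v = 2) (ha : E a v) (hb : E b v)
    (hab : a ≠ b) (hu : E u v) : u = a ∨ u = b := by
  obtain ⟨y, -, hy⟩ := (Nat.card_eq_two_iff' (⟨a, ha⟩ : {u // E u v})).mp h
  have hby : (⟨b, hb⟩ : {u // E u v}) = y := hy _ fun h => hab (congrArg Subtype.val h).symm
  by_cases hua : u = a
  · exact .inl hua
  · have huy : (⟨u, hu⟩ : {u // E u v}) = y := hy _ fun h => hua (congrArg Subtype.val h)
    exact .inr (congrArg Subtype.val (huy.trans hby.symm))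

theorem transGen_adjoin_edge {F : V → V → Prop} {a b x y : V}
    (h : Relation.TransGen (fun c d => F c d ∨ (c, d) = (a, b)) x y) :
    Relation.TransGen F x y ∨ (Relation.ReflTransGen F x a ∧ Relation.ReflTransGen F b y) := by
  induction h with
  | single h =>
    rcases h with h | h
    · exact .inl (.single h)
    · obtain ⟨rfl, rfl⟩ := Prod.mk.inj h
      exact .inr ⟨.refl, .refl⟩
  | tail _ hlast ih =>
    rcases hlast with hF | hab
    · exact ih.imp (·.tail hF) fun ⟨hxa, hby⟩ => ⟨hxa, hby.tail hF⟩
    · obtain ⟨rfl, rfl⟩ := Prod.mk.inj hab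
      exact .inr ⟨ih.elim (·.to_reflTransGen) (·.1), .refl⟩

theorem IsPhyloNet.of_acyclic_of_degrees [Fintype V] {lab : X → V} (hN : IsPhyloNet E lab)
    (hE' : Acyclic E')
    (hdeg : ∀ v, (indeg E' v = indeg E v ∧ outdeg E' v = outdeg E v) ∨
      (IsSplit E v ∧ IsRetic E' v) ∨ (IsRetic E v ∧ IsSplit E' v)) :
    IsPhyloNet E' lab := by
  have key : ∀ v, (IsRoot E' v ↔ IsRoot E v) ∧ (IsLeafNode E' v ↔ IsLeafNode E v) ∧
      (IsSplit E' v ∨ IsRetic E' v ↔ IsSplit E v ∨ IsRetic E v) := by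
    intro v
    have := hdeg v
    unfold IsRoot IsLeafNode IsSplit IsRetic at *
    omega
  refine ⟨hE', (existsUnique_congr fun v => (key v).1).mpr hN.root_unique, hN.lab_inj,
    fun v => (key v).2.1.trans (hN.leaf_iff v), fun v => ?_⟩
  have := key v
  have := hN.node_types v
  tauto

def reverseEdge (E : V → V → Prop) (s r : V) : V → V → Prop :=
  fun a b => (E a b ∧ (a, b) ≠ (s, r)) ∨ (a, b) = (r, s)

section reverseEdge

variable {s r : V}

theorem reverseEdge_iff_of_left_ne {a b : V} (hs : a ≠ s) (hr : a ≠ r) :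
    reverseEdge E s r a b ↔ E a b := by
  simp [reverseEdge, hs, hr]

theorem reverseEdge_iff_of_right_ne {a b : V} (hs : b ≠ s) (hr : b ≠ r) :
    reverseEdge E s r a b ↔ E a b := by
  simp [reverseEdge, hs, hr]

theorem indeg_reverseEdge_of_ne {v : V} (hs : v ≠ s) (hr : v ≠ r) :
    indeg (reverseEdge E s r) v = indeg E v :=
  Nat.card_congr <| Equiv.subtypeEquivRight fun _ => reverseEdge_iff_of_right_ne hs hr

theorem outdeg_reverseEdge_of_ne {v : V} (hs : v ≠ s) (hr : v ≠ r) :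
    outdeg (reverseEdge E s r) v = outdeg E v :=
  Nat.card_congr <| Equiv.subtypeEquivRight fun _ => reverseEdge_iff_of_left_ne hs hr

theorem indeg_reverseEdge_tail [Finite V] (hne : s ≠ r) (hrs : ¬ E r s) :
    indeg (reverseEdge E s r) s = indeg E s + 1 := by
  have : {u | reverseEdge E s r u s} = insert r {u | E u s} := by
    ext u
    simp [reverseEdge, hne, or_comm]
  rw [indeg_eq_ncard, indeg_eq_ncard, this]
  exact Set.ncard_insert_of_notMem hrs

theorem outdeg_reverseEdge_tail (hne : s ≠ r) (hsr : E s r) :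
    outdeg (reverseEdge E s r) s = outdeg E s - 1 := by
  have : {w | reverseEdge E s r s w} = {w | E s w} \ {r} := by
    ext w
    simp [reverseEdge, hne]
  rw [outdeg_eq_ncard, outdeg_eq_ncard, this]
  exact Set.ncard_sdiff_singleton_of_mem hsr

theorem indeg_reverseEdge_head (hne : s ≠ r) (hsr : E s r) :
    indeg (reverseEdge E s r) r = indeg E r - 1 := by
  have : {u | reverseEdge E s r u r} = {u | E u r} \ {s} := by
    ext u
    simp [reverseEdge, hne.symm]
  rw [indeg_eq_ncard, indeg_eq_ncard, this]
  exact Set.ncard_sdiff_singleton_of_mem hsr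

theorem outdeg_reverseEdge_head [Finite V] (hne : s ≠ r) (hrs : ¬ E r s) :
    outdeg (reverseEdge E s r) r = outdeg E r + 1 := by
  have : {w | reverseEdge E s r r w} = insert s {w | E r w} := by
    ext w
    simp [reverseEdge, hne.symm, or_comm]
  rw [outdeg_eq_ncard, outdeg_eq_ncard, this]
  exact Set.ncard_insert_of_notMem hrs

theorem IsSplit.isRetic_reverseEdge_tail [Finite V] (hs : IsSplit E s) (hne : s ≠ r)
    (hsr : E s r) (hrs : ¬ E r s) : IsRetic (reverseEdge E s r) s :=
  ⟨by rw [indeg_reverseEdge_tail hne hrs, hs.1], by rw [outdeg_reverseEdge_tail hne hsr, hs.2]⟩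

theorem IsRetic.isSplit_reverseEdge_head [Finite V] (hr : IsRetic E r) (hne : s ≠ r)
    (hsr : E s r) (hrs : ¬ E r s) : IsSplit (reverseEdge E s r) r :=
  ⟨by rw [indeg_reverseEdge_head hne hsr, hr.1], by rw [outdeg_reverseEdge_head hne hrs, hr.2]⟩

theorem acyclic_reverseEdge {t : V} (hE : Acyclic E) (hne : s ≠ r) (hts : E t s)
    (hr : ∀ u, E u r → u = s ∨ u = t) : Acyclic (reverseEdge E s r) := by
  have hF : (fun a b => E a b ∧ (a, b) ≠ (s, r)) ≤ E := fun _ _ => And.left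
  intro v hv
  rcases transGen_adjoin_edge (F := fun a b => E a b ∧ (a, b) ≠ (s, r)) hv with hcyc | ⟨hvr, hsv⟩
  · exact hE v (Relation.TransGen.mono hF _ _ hcyc)
  obtain ⟨u, hsu, hur, hus⟩ := Relation.TransGen.tail'_iff.mp <|
    (Relation.reflTransGen_iff_eq_or_transGen.mp (hsv.trans hvr)).resolve_left hne.symm
  obtain rfl : u = t := (hr u hur).resolve_left fun h => hus (by rw [h])
  exact hE s (.tail' (Relation.ReflTransGen.mono hF _ _ hsu) hts)

end reverseEdge

/-- reversing the side edge `(s,r)` of a triangle `t, s, r` (with `s` a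
split node and `r` a reticulation) yields again a binary phylogenetic network. -/
theorem triangle_reversal {V X : Type} [Fintype V] (E : V → V → Prop) (lab : X → V)
    (t s r : V) (hN : IsPhyloNet E lab) (hts : E t s) (htr : E t r) (hsr : E s r)
    (hs : IsSplit E s) (hr : IsRetic E r) :
    IsPhyloNet (fun a b => (E a b ∧ (a, b) ≠ (s, r)) ∨ (a, b) = (r, s)) lab := by
  have hne : s ≠ r := hN.acyclic.ne hsr
  have hrs : ¬ E r s := hN.acyclic.asymm hsr
  have parents_r : ∀ u, E u r → u = s ∨ u = t :=
    fun _ => eq_or_eq_of_indeg_eq_two hr.1 hsr htr (hN.acyclic.ne hts).symm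
  refine hN.of_acyclic_of_degrees (acyclic_reverseEdge hN.acyclic hne hts parents_r) fun v => ?_
  by_cases hvs : v = s
  · subst hvs
    exact .inr (.inl ⟨hs, hs.isRetic_reverseEdge_tail hne hsr hrs⟩)
  by_cases hvr : v = r
  · subst hvr
    exact .inr (.inr ⟨hr, hr.isSplit_reverseEdge_head hne hsr hrs⟩)
  exact .inl ⟨indeg_reverseEdge_of_ne hvs hvr, outdeg_reverseEdge_of_ne hvs hvr⟩

end Phylo
end
end

section
/- Let M and M' be tier-1 binary phylogenetic networks, each containing a triangle, such that M' is obtained from M by a single head move. Then M and M' have the same (unique) embedded tree. -/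
noncomputable section

namespace Phylo

/-!
Let `v` be the reticulation of a tier-1 network, with parents `u` and `p`. Switching off `(u, v)`,
i.e. deleting it and suppressing the two vertices `u`, `v` of in- and out-degree one that this
creates, yields a tree, and every embedded tree is subdivided by the network minus `(u, v)` or
minus `(p, v)`; since a subdivision determines the tree it subdivides, there are at most these two
embedded trees. A triangle makes `u` and `p` adjacent, and then the two trees are isomorphic by
swapping `u` and `p`, so the embedded tree is unique. Finally, a head move of `(u, v)` only rewires
edges at `v`, so switching off `(u, v)` before and after the move displays the same tree.
-/

open Function Relation

section Card

variable {α : Type*} {P : α → Prop} {a b : α}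

lemma card_subtype_pos [Finite α] (ha : P a) : 0 < Nat.card {x // P x} :=
  have : Nonempty {x // P x} := ⟨⟨a, ha⟩⟩
  Nat.card_pos

lemma two_le_card_subtype [Finite α] (ha : P a) (hb : P b) (hab : a ≠ b) :
    2 ≤ Nat.card {x // P x} :=
  have : Nontrivial {x // P x} := ⟨⟨a, ha⟩, ⟨b, hb⟩, fun h => hab (congrArg Subtype.val h)⟩
  Finite.one_lt_card

lemma exists_of_card_subtype_eq_one (h : Nat.card {x // P x} = 1) : ∃ a, P a :=
  have ⟨⟨a, ha⟩, _⟩ := Nat.card_eq_one_iff_exists.mp h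
  ⟨a, ha⟩

lemma eq_of_card_subtype_eq_one (h : Nat.card {x // P x} = 1) (ha : P a) (hb : P b) : a = b :=
  congrArg Subtype.val ((Nat.card_eq_one_iff_unique.mp h).1.elim ⟨a, ha⟩ ⟨b, hb⟩)

lemma card_subtype_eq_one (ha : P a) (hu : ∀ b, P b → b = a) : Nat.card {x // P x} = 1 :=
  Nat.card_eq_one_iff_exists.mpr ⟨⟨a, ha⟩, fun y => Subtype.ext (hu y y.2)⟩

lemma eq_or_eq_of_card_subtype_eq_two (h : Nat.card {x // P x} = 2) (ha : P a) (hb : P b)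
    (hab : a ≠ b) {c : α} (hc : P c) : c = a ∨ c = b := by
  refine or_iff_not_imp_left.mpr fun hca => ?_
  obtain ⟨y, -, hy⟩ := (Nat.card_eq_two_iff' (⟨a, ha⟩ : {x // P x})).mp h
  have hc' := hy ⟨c, hc⟩ fun e => hca (congrArg Subtype.val e)
  have hb' := hy ⟨b, hb⟩ fun e => hab (congrArg Subtype.val e).symm
  exact congrArg Subtype.val (hc'.trans hb'.symm)

lemma card_eq_of_subsingleton {β : Type*} [Subsingleton α] [Subsingleton β]
    (h : Nonempty α ↔ Nonempty β) : Nat.card α = Nat.card β := by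
  rcases isEmpty_or_nonempty α with hα | ⟨⟨a⟩⟩
  · have : IsEmpty β := not_nonempty_iff.mp (h.not.mp (not_nonempty_iff.mpr hα))
    simp
  · obtain ⟨b⟩ := h.mp ⟨a⟩
    rw [Nat.card_of_subsingleton a, Nat.card_of_subsingleton b]

end Card

section Digraph

variable {V : Type} {E : V → V → Prop} {u v w x : V}

lemma Acyclic.irrefl_s7 (h : Acyclic E) (x : V) : ¬ E x x :=
  fun he => h x (.single he)

lemma Acyclic.ne_s7 (h : Acyclic E) (he : E x w) : x ≠ w :=
  fun hxw => h.irrefl_s7 x (hxw ▸ he)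

lemma Acyclic.asymm_s7 (h : Acyclic E) (he : E x w) : ¬ E w x :=
  fun hwx => h x ((TransGen.single he).tail hwx)

lemma Acyclic.mono {E' : V → V → Prop} (h : Acyclic E) (hle : ∀ a b, E' a b → E a b) :
    Acyclic E' :=
  fun v hv => h v (TransGen.mono hle _ _ hv)

lemma Acyclic.swap (h : Acyclic E) : Acyclic (swap E) :=
  fun v hv => h v (transGen_swap.mp hv)

lemma Acyclic.wellFounded [Finite V] (h : Acyclic E) : WellFounded (TransGen E) :=
  have : IsTrans V (TransGen E) := ⟨fun _ _ _ => TransGen.trans⟩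
  have : Std.Irrefl (TransGen E) := ⟨h⟩
  Finite.wellFounded_of_trans_of_irrefl _

/-- The digraph `E` with the edge `(u, v)` removed. -/
def deleteEdge (E : V → V → Prop) (u v : V) (a b : V) : Prop := E a b ∧ (a, b) ≠ (u, v)

lemma indeg_deleteEdge_of_ne (hx : x ≠ v) : indeg (deleteEdge E u v) x = indeg E x :=
  Nat.card_congr <| Equiv.subtypeEquivRight fun a => by simp [deleteEdge, hx]

lemma outdeg_deleteEdge_of_ne (hx : x ≠ u) : outdeg (deleteEdge E u v) x = outdeg E x :=
  Nat.card_congr <| Equiv.subtypeEquivRight fun a => by simp [deleteEdge, hx]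

lemma indeg_deleteEdge [Finite V] (h : E u v) : indeg (deleteEdge E u v) v = indeg E v - 1 := by
  have : {a | deleteEdge E u v a v} = {a | E a v} \ {u} := by ext; simp [deleteEdge]
  show Nat.card {a | deleteEdge E u v a v} = Nat.card {a | E a v} - 1
  rw [Nat.card_coe_set_eq, Nat.card_coe_set_eq, this]
  exact Set.ncard_sdiff_singleton_of_mem h

lemma outdeg_deleteEdge [Finite V] (h : E u v) : outdeg (deleteEdge E u v) u = outdeg E u - 1 := by
  have : {b | deleteEdge E u v u b} = {b | E u b} \ {v} := by ext; simp [deleteEdge]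
  show Nat.card {b | deleteEdge E u v u b} = Nat.card {b | E u b} - 1
  rw [Nat.card_coe_set_eq, Nat.card_coe_set_eq, this]
  exact Set.ncard_sdiff_singleton_of_mem h

end Digraph

section PhyloNet

variable {V X : Type} [Fintype V] {E : V → V → Prop} {lab : X → V} {a b v : V}

lemma IsPhyloNet.isRetic_of_ne (hN : IsPhyloNet E lab) (ha : E a v) (hb : E b v) (hab : a ≠ b) :
    IsRetic E v := by
  have := two_le_card_subtype (P := (E · v)) ha hb hab
  rcases hN.node_types v with h | h | h | h <;>
    simp only [IsRoot, IsLeafNode, IsSplit, IsRetic, indeg] at h ⊢ <;> omega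

lemma IsPhyloNet.isSplit_of_ne (hN : IsPhyloNet E lab) (ha : E v a) (hb : E v b) (hab : a ≠ b) :
    IsSplit E v := by
  have := two_le_card_subtype (P := (E v ·)) ha hb hab
  rcases hN.node_types v with h | h | h | h <;>
    simp only [IsRoot, IsLeafNode, IsSplit, IsRetic, outdeg] at h ⊢ <;> omega

lemma IsPhyloNet.isSplit_of_not_isRetic (hN : IsPhyloNet E lab) (ha : E a v) (hb : E v b)
    (hv : ¬ IsRetic E v) : IsSplit E v := by
  have := card_subtype_pos (P := (E · v)) ha
  have := card_subtype_pos (P := (E v ·)) hb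
  rcases hN.node_types v with h | h | h | h <;>
    simp only [IsRoot, IsLeafNode, IsSplit, IsRetic, indeg, outdeg] at h hv ⊢ <;> omega

lemma IsPhyloNet.isRetic_of_outdeg_eq_one (hN : IsPhyloNet E lab) (ha : E a v)
    (hv : outdeg E v = 1) : IsRetic E v := by
  have := card_subtype_pos (P := (E · v)) ha
  rcases hN.node_types v with h | h | h | h <;>
    simp only [IsRoot, IsLeafNode, IsSplit, IsRetic, indeg, outdeg] at h hv ⊢ <;> omega

lemma IsPhyloNet.isRoot_of_indeg_eq_zero (hN : IsPhyloNet E lab) (hv : indeg E v = 0) :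
    IsRoot E v := by
  rcases hN.node_types v with h | h | h | h <;>
    simp only [IsRoot, IsLeafNode, IsSplit, IsRetic] at h ⊢ <;> omega

lemma IsPhyloNet.not_indeg_eq_one_and_outdeg_eq_one (hN : IsPhyloNet E lab) (v : V) :
    ¬ (indeg E v = 1 ∧ outdeg E v = 1) := by
  rcases hN.node_types v with h | h | h | h <;>
    simp only [IsRoot, IsLeafNode, IsSplit, IsRetic] at h <;> omega

end PhyloNet

lemma IsRetic.eq_of_reticCount_eq_one {V : Type} {E : V → V → Prop} {a b : V}
    (h1 : reticCount E = 1) (ha : IsRetic E a) (hb : IsRetic E b) : a = b :=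
  eq_of_card_subtype_eq_one h1 ha hb

section Iso

variable {X : Type}

lemma NetIso.symm {N N' : Net X} (h : NetIso N N') : NetIso N' N := by
  obtain ⟨ψ, he, hl⟩ := h
  exact ⟨ψ.symm, fun a b => by simpa using (he (ψ.symm a) (ψ.symm b)).symm,
    fun x => by simp [← hl x]⟩

lemma NetIso.trans {N₁ N₂ N₃ : Net X} (h : NetIso N₁ N₂) (h' : NetIso N₂ N₃) : NetIso N₁ N₃ := by
  obtain ⟨ψ, he, hl⟩ := h
  obtain ⟨ψ', he', hl'⟩ := h'
  exact ⟨ψ.trans ψ', fun a b => (he a b).trans (he' _ _), fun x => by simp [hl, hl']⟩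

variable {V W : Type} {E : V → V → Prop} {F : W → W → Prop} {lab : X → V} {lab' : X → W}

lemma indeg_equiv (ψ : V ≃ W) (he : ∀ a b, E a b ↔ F (ψ a) (ψ b)) (v : V) :
    indeg F (ψ v) = indeg E v :=
  Nat.card_congr (ψ.subtypeEquiv fun a => he a v).symm

lemma outdeg_equiv (ψ : V ≃ W) (he : ∀ a b, E a b ↔ F (ψ a) (ψ b)) (v : V) :
    outdeg F (ψ v) = outdeg E v :=
  Nat.card_congr (ψ.subtypeEquiv fun b => he v b).symm

lemma LabIso.isPhyloNet [Fintype V] [Fintype W] (h : LabIso E lab F lab')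
    (hN : IsPhyloNet E lab) : IsPhyloNet F lab' := by
  obtain ⟨ψ, he, hl⟩ := h
  have hdeg := indeg_equiv ψ he
  have hdeg' := outdeg_equiv ψ he
  have hroot v : IsRoot F (ψ v) ↔ IsRoot E v := by simp only [IsRoot, hdeg, hdeg']
  have hleaf v : IsLeafNode F (ψ v) ↔ IsLeafNode E v := by simp only [IsLeafNode, hdeg, hdeg']
  have hsplit v : IsSplit F (ψ v) ↔ IsSplit E v := by simp only [IsSplit, hdeg, hdeg']
  have hret v : IsRetic F (ψ v) ↔ IsRetic E v := by simp only [IsRetic, hdeg, hdeg']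
  refine ⟨fun w hw => hN.acyclic (ψ.symm w) ?_, ?_, fun x y hxy => ?_, fun w => ?_, fun w => ?_⟩
  · exact TransGen.lift ψ.symm (fun a b hab => (he _ _).mpr (by simpa using hab)) _ _ hw
  · obtain ⟨ρ, hρ, hu⟩ := hN.root_unique
    refine ⟨ψ ρ, (hroot ρ).2 hρ, fun w hw => ?_⟩
    rw [← hu _ ((hroot (ψ.symm w)).1 (by rwa [ψ.apply_symm_apply])), ψ.apply_symm_apply]
  · exact hN.lab_inj (ψ.injective (by rw [hl, hl, hxy]))
  · obtain ⟨v, rfl⟩ := ψ.surjective w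
    simp only [hleaf, hN.leaf_iff, Set.mem_range, ← hl, ψ.injective.eq_iff]
  · obtain ⟨v, rfl⟩ := ψ.surjective w
    simpa only [hroot, hleaf, hsplit, hret] using hN.node_types v

lemma LabIso.reticCount_eq (h : LabIso E lab F lab') : reticCount F = reticCount E := by
  obtain ⟨ψ, he, -⟩ := h
  refine (Nat.card_congr (ψ.subtypeEquiv fun v => ?_)).symm
  simp only [IsRetic, indeg_equiv ψ he, outdeg_equiv ψ he]

lemma LabIso.hasTriangle (h : LabIso E lab F lab') (hΔ : HasTriangle E) : HasTriangle F := by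
  obtain ⟨ψ, he, -⟩ := h
  obtain ⟨t, s, r, h₁, h₂, h₃⟩ := hΔ
  exact ⟨ψ t, ψ s, ψ r, (he _ _).mp h₁, (he _ _).mp h₂, (he _ _).mp h₃⟩

end Iso

section Subdivision

variable {V W : Type}

inductive PathAvoiding (E : V → V → Prop) (S : Set V) : V → V → Prop
  | single {x y : V} : E x y → PathAvoiding E S x y
  | cons {x y z : V} : E x y → y ∉ S → PathAvoiding E S y z → PathAvoiding E S x z

namespace PathAvoiding

variable {E : V → V → Prop} {S : Set V} {x y z : V}

lemma iff_isChain : PathAvoiding E S x y ↔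
    ∃ l : List V, (x :: (l ++ [y])).IsChain E ∧ ∀ z ∈ l, z ∉ S := by
  constructor
  · intro h
    induction h with
    | single h => exact ⟨[], by simpa using h, by simp⟩
    | cons hxy hy _ ih =>
      obtain ⟨l, hl, hS⟩ := ih
      exact ⟨_ :: l, List.isChain_cons_cons.mpr ⟨hxy, hl⟩, by simpa [hy] using hS⟩
  · rintro ⟨l, hl, hS⟩
    induction l generalizing x with
    | nil => exact .single (by simpa using hl)
    | cons w l ih =>
      obtain ⟨hxw, hl⟩ := List.isChain_cons_cons.mp hl
      exact .cons hxw (hS w (by simp)) (ih hl fun z hz => hS z (by simp [hz]))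

lemma transGen (h : PathAvoiding E S x y) : TransGen E x y := by
  induction h with
  | single h => exact .single h
  | cons h _ _ ih => exact .head h ih

lemma exists_last (h : PathAvoiding E S x y) : ∃ z, E z y := by
  induction h with
  | single h => exact ⟨_, h⟩
  | cons _ _ _ ih => exact ih

lemma exists_first (h : PathAvoiding E S x y) :
    ∃ z, E x z ∧ (z = y ∨ z ∉ S ∧ PathAvoiding E S z y) := by
  cases h with
  | single h => exact ⟨y, h, .inl rfl⟩
  | cons h hz h' => exact ⟨_, h, .inr ⟨hz, h'⟩⟩

lemma snoc (h : PathAvoiding E S x y) (hy : y ∉ S) (hyz : E y z) : PathAvoiding E S x z := by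
  induction h with
  | single h => exact .cons h hy (.single hyz)
  | cons h hw _ ih => exact .cons h hw (ih hy hyz)

lemma swap (h : PathAvoiding E S x y) : PathAvoiding (swap E) S y x := by
  induction h with
  | single h => exact .single h
  | cons h hy _ ih => exact ih.snoc hy h

lemma map {V' : Type} {E' : V' → V' → Prop} {S' : Set V'} (f : V → V')
    (hE : ∀ a b, E a b → E' (f a) (f b)) (hS : ∀ a, a ∉ S → f a ∉ S')
    (h : PathAvoiding E S x y) : PathAvoiding E' S' (f x) (f y) := by
  induction h with
  | single h => exact .single (hE _ _ h)
  | cons h hy _ ih => exact .cons (hE _ _ h) (hS _ hy) ih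

lemma eq_of_deterministic (hdet : ∀ x ∉ S, ∀ y z, E x y → E x z → y = z) (hx : x ∉ S)
    {b₁ b₂ : V} (h₁ : PathAvoiding E S x b₁) (h₂ : PathAvoiding E S x b₂) (hb₁ : b₁ ∈ S)
    (hb₂ : b₂ ∈ S) : b₁ = b₂ := by
  induction h₁ with
  | single h =>
    cases h₂ with
    | single h' => exact hdet _ hx _ _ h h'
    | cons h' hy _ => exact absurd (hdet _ hx _ _ h h' ▸ hb₁) hy
  | cons h hy _ ih =>
    cases h₂ with
    | single h' => exact absurd (hdet _ hx _ _ h h' ▸ hb₂) hy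
    | cons h' _ h₂ => exact ih hy (hdet _ hx _ _ h h' ▸ h₂) hb₁

lemma exists_of_adj [Finite V] (hac : Acyclic E) (hout : ∀ x ∉ S, ∃ y, E x y) (h : E x y) :
    ∃ b ∈ S, PathAvoiding E S x b := by
  induction y using hac.swap.wellFounded.induction generalizing x with
  | _ y ih =>
    by_cases hy : y ∈ S
    · exact ⟨y, hy, .single h⟩
    · obtain ⟨z, hz⟩ := hout y hy
      obtain ⟨b, hb, hyb⟩ := ih z (transGen_swap.mpr (.single hz)) hz
      exact ⟨b, hb, .cons h hy hyb⟩

end PathAvoiding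

variable {E : V → V → Prop} {F : W → W → Prop} {φ : W → V}

lemma isSubdivision_iff : IsSubdivision F E φ ↔ Injective φ ∧
    (∀ v, v ∉ Set.range φ → indeg E v = 1 ∧ outdeg E v = 1) ∧
    ∀ a b, F a b ↔ PathAvoiding E (Set.range φ) (φ a) (φ b) := by
  simp only [PathAvoiding.iff_isChain]
  rfl

namespace IsSubdivision

lemma adj_iff (hs : IsSubdivision F E φ) (a b : W) :
    F a b ↔ PathAvoiding E (Set.range φ) (φ a) (φ b) :=
  (isSubdivision_iff.mp hs).2.2 a b

lemma swap (hs : IsSubdivision F E φ) : IsSubdivision (swap F) (swap E) φ :=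
  isSubdivision_iff.mpr ⟨hs.1, fun v hv => (hs.2.1 v hv).symm, fun a b =>
    ⟨fun h => ((hs.adj_iff b a).mp h).swap, fun h => (hs.adj_iff b a).mpr h.swap⟩⟩

lemma acyclic (hs : IsSubdivision F E φ) (hE : Acyclic E) : Acyclic F :=
  fun a ha => hE (φ a) (TransGen.lift' φ (fun _ _ h => ((hs.adj_iff _ _).mp h).transGen) _ _ ha)

lemma exists_adj [Finite V] (hs : IsSubdivision F E φ) (hE : Acyclic E) {a : W} {y : V}
    (h : E (φ a) y) : ∃ b, F a b := by
  obtain ⟨_, ⟨b, rfl⟩, hb⟩ := PathAvoiding.exists_of_adj hE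
    (fun x hx => exists_of_card_subtype_eq_one (hs.2.1 x hx).2) h
  exact ⟨b, (hs.adj_iff a b).mpr hb⟩

lemma outdeg_le [Finite V] (hs : IsSubdivision F E φ) (a : W) : outdeg F a ≤ outdeg E (φ a) := by
  have hdet : ∀ x ∉ Set.range φ, ∀ y z, E x y → E x z → y = z := fun x hx _ _ =>
    eq_of_card_subtype_eq_one (hs.2.1 x hx).2
  choose g hg using fun b : {b // F a b} => ((hs.adj_iff a b).mp b.2).exists_first
  refine Nat.card_le_card_of_injective (fun b => ⟨g b, (hg b).1⟩) fun b₁ b₂ h => Subtype.ext ?_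
  replace h : g b₁ = g b₂ := congrArg Subtype.val h
  apply hs.1
  rcases (hg b₁).2 with h₁ | ⟨hn₁, h₁⟩ <;> rcases (hg b₂).2 with h₂ | ⟨hn₂, h₂⟩
  · rw [← h₁, ← h₂, h]
  · exact absurd ⟨_, h₁.symm⟩ (h ▸ hn₂)
  · exact absurd ⟨_, h₂.symm⟩ (h ▸ hn₁)
  · exact PathAvoiding.eq_of_deterministic hdet hn₁ h₁ (h ▸ h₂) ⟨_, rfl⟩ ⟨_, rfl⟩

lemma mem_range_iff [Finite V] [Finite W] (hs : IsSubdivision F E φ) (hE : Acyclic E)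
    (hF : ∀ a, ¬ (indeg F a = 1 ∧ outdeg F a = 1)) (v : V) :
    v ∈ Set.range φ ↔ ¬ (indeg E v = 1 ∧ outdeg E v = 1) := by
  refine ⟨?_, fun h => by_contra fun hv => h (hs.2.1 v hv)⟩
  rintro ⟨a, rfl⟩ ⟨hin, hout⟩
  obtain ⟨b, hb⟩ := hs.exists_adj hE (exists_of_card_subtype_eq_one hout).choose_spec
  obtain ⟨b', hb'⟩ := hs.swap.exists_adj hE.swap (exists_of_card_subtype_eq_one hin).choose_spec
  have := card_subtype_pos (P := (F a ·)) hb
  have := card_subtype_pos (P := (F · a)) hb'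
  have := hs.outdeg_le a
  have := hs.swap.outdeg_le a
  refine hF a ⟨?_, ?_⟩ <;> simp only [indeg, outdeg, Function.swap] at * <;> omega

lemma eq_of_forall_not_adj {X : Type} [Fintype W] {lab : X → W} (hs : IsSubdivision F E φ)
    (hF : IsPhyloNet F lab) {x y : V} (hx : ∀ z, ¬ E z x) (hy : ∀ z, ¬ E z y) : x = y := by
  have hroot x (hx : ∀ z, ¬ E z x) : ∃ a, φ a = x ∧ IsRoot F a := by
    obtain ⟨a, rfl⟩ : x ∈ Set.range φ := by_contra fun h =>
      hx _ (exists_of_card_subtype_eq_one (hs.2.1 x h).1).choose_spec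
    refine ⟨a, rfl, hF.isRoot_of_indeg_eq_zero (Nat.card_eq_zero.mpr (.inl ⟨fun b => ?_⟩))⟩
    exact hx _ ((hs.adj_iff _ _).mp b.2).exists_last.choose_spec
  obtain ⟨a, rfl, ha⟩ := hroot x hx
  obtain ⟨b, rfl, hb⟩ := hroot y hy
  obtain ⟨ρ, -, hρ⟩ := hF.root_unique
  rw [hρ a ha, hρ b hb]

lemma map_equiv {V' : Type} {E' : V' → V' → Prop} (hs : IsSubdivision F E φ) (ψ : V ≃ V')
    (he : ∀ a b, E a b ↔ E' (ψ a) (ψ b)) : IsSubdivision F E' (ψ ∘ φ) := by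
  have hrange v : ψ.symm v ∈ Set.range φ ↔ v ∈ Set.range (ψ ∘ φ) := by
    simp [Set.range_comp]
  refine isSubdivision_iff.mpr ⟨ψ.injective.comp hs.1, fun v hv => ?_, fun a b => ?_⟩
  · rw [← ψ.apply_symm_apply v, indeg_equiv ψ he, outdeg_equiv ψ he]
    exact hs.2.1 _ (mt (hrange v).mp hv)
  · refine (hs.adj_iff a b).trans ⟨PathAvoiding.map ψ (fun _ _ => (he _ _).mp) fun x hx => ?_,
      fun h => ?_⟩
    · rwa [← hrange, ψ.symm_apply_apply]
    · have := h.map ψ.symm (fun _ _ h => (he _ _).mpr (by simpa using h)) fun x => mt (hrange x).mp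
      simpa using this

lemma comp_equiv {W' : Type} {F' : W' → W' → Prop} (hs : IsSubdivision F E φ) (ψ : W' ≃ W)
    (hf : ∀ a b, F' a b ↔ F (ψ a) (ψ b)) : IsSubdivision F' E (φ ∘ ψ) := by
  have hrange : Set.range (φ ∘ ψ) = Set.range φ := ψ.surjective.range_comp φ
  refine isSubdivision_iff.mpr ⟨hs.1.comp ψ.injective, hrange ▸ hs.2.1, fun a b => ?_⟩
  rw [hf, hs.adj_iff, hrange]
  rfl

end IsSubdivision

lemma netIso_of_isSubdivision {X : Type} [Finite V] {E : V → V → Prop} {lab : X → V}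
    {T₁ T₂ : Net X} {φ₁ : T₁.V → V} {φ₂ : T₂.V → V} (h₁ : T₁.valid) (h₂ : T₂.valid)
    (hE : Acyclic E) (hs₁ : IsSubdivision T₁.E E φ₁) (hs₂ : IsSubdivision T₂.E E φ₂)
    (hl₁ : ∀ x, φ₁ (T₁.lab x) = lab x) (hl₂ : ∀ x, φ₂ (T₂.lab x) = lab x) : NetIso T₁ T₂ := by
  have hrange : Set.range φ₁ = Set.range φ₂ := by
    ext v
    rw [hs₁.mem_range_iff hE h₁.not_indeg_eq_one_and_outdeg_eq_one,
      hs₂.mem_range_iff hE h₂.not_indeg_eq_one_and_outdeg_eq_one]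
  let ψ : T₁.V ≃ T₂.V := (Equiv.ofInjective φ₁ hs₁.1).trans
    ((Equiv.setCongr hrange).trans (Equiv.ofInjective φ₂ hs₂.1).symm)
  have hψ a : φ₂ (ψ a) = φ₁ a := by simp [ψ, Equiv.apply_ofInjective_symm]
  refine ⟨ψ, fun a b => ?_, fun x => hs₂.1 (by rw [hψ, hl₁, hl₂])⟩
  rw [hs₁.adj_iff, hs₂.adj_iff, hψ, hψ, hrange]

end Subdivision

section EmbeddedTree

variable {X : Type} {T T' N N' : Net X}

lemma IsTree.of_netIso (hT : IsTree T) (h : NetIso T T') : IsTree T' :=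
  ⟨LabIso.isPhyloNet h hT.1, (LabIso.reticCount_eq h).trans hT.2⟩

lemma EmbeddedTree.trans_netIso (hT : EmbeddedTree T N) (h : NetIso N N') : EmbeddedTree T N' := by
  obtain ⟨hT, E', φ, hsub, hs, hlab⟩ := hT
  obtain ⟨ψ, he, hl⟩ := h
  refine ⟨hT, fun x y => E' (ψ.symm x) (ψ.symm y), ψ ∘ φ, fun a b h => ?_,
    hs.map_equiv ψ (by simp), fun x => by simp [hlab, hl]⟩
  simpa using (he _ _).mp (hsub _ _ h)

lemma NetIso.trans_embeddedTree (h : NetIso T' T) (hT : EmbeddedTree T N) :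
    EmbeddedTree T' N := by
  have hT' := hT.1.of_netIso h.symm
  obtain ⟨ψ, he, hl⟩ := h
  obtain ⟨-, E', φ, hsub, hs, hlab⟩ := hT
  exact ⟨hT', E', φ ∘ ψ, hsub, hs.comp_equiv ψ he, fun x => by simp [hl, hlab]⟩

end EmbeddedTree

section Suppress

variable {V : Type} {E : V → V → Prop} {S : Set V}

def suppress (E : V → V → Prop) (S : Set V) (a b : ↥Sᶜ) : Prop :=
  E a b ∨ ∃ z ∈ S, E a z ∧ E z b

lemma isSubdivision_suppress (hS : ∀ z ∈ S, indeg E z = 1 ∧ outdeg E z = 1)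
    (hSS : ∀ z ∈ S, ∀ y, E z y → y ∉ S) : IsSubdivision (suppress E S) E Subtype.val := by
  refine isSubdivision_iff.mpr ⟨Subtype.val_injective, fun v hv => hS v (by simpa using hv),
    fun a b => ?_⟩
  rw [Subtype.range_coe]
  constructor
  · rintro (h | ⟨z, hz, haz, hzb⟩)
    · exact .single h
    · exact .cons haz (by simpa using hz) (.single hzb)
  · rintro (h | ⟨h, hy, h' | ⟨h', hy', -⟩⟩)
    · exact .inl h
    · exact .inr ⟨_, by simpa using hy, h, h'⟩
    · exact absurd hy' (by simpa using hSS _ (by simpa using hy) _ h')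

lemma outdeg_suppress (hpar : ∀ a b y, E a y → E b y → a = b)
    (hS : ∀ z ∈ S, indeg E z = 1 ∧ outdeg E z = 1) (hSS : ∀ z ∈ S, ∀ y, E z y → y ∉ S)
    (x : ↥Sᶜ) : outdeg (suppress E S) x = outdeg E x := by
  have hnext y : ∃ w, w ∉ S ∧ (y ∈ S → E y w) ∧ (y ∉ S → w = y) := by
    by_cases hy : y ∈ S
    · obtain ⟨w, hw⟩ := exists_of_card_subtype_eq_one (hS y hy).2
      exact ⟨w, hSS y hy w hw, fun _ => hw, fun h => absurd hy h⟩
    · exact ⟨y, hy, fun h => absurd h hy, fun _ => rfl⟩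
  -- `y ↦ next y` sends a child of `x` to itself or, if it is suppressed, to its own child.
  choose next hnS hnE hny using hnext
  let f (y : {y // E x y}) : {b : ↥Sᶜ // suppress E S x b} :=
    ⟨⟨next y, hnS y⟩, by
      by_cases hy : y.1 ∈ S
      · exact .inr ⟨y, hy, y.2, hnE y hy⟩
      · exact .inl (show E x (next y) by rw [hny y hy]; exact y.2)⟩
  refine (Nat.card_congr (Equiv.ofBijective f ⟨fun y₁ y₂ h => Subtype.ext ?_, ?_⟩)).symm
  · replace h : next y₁ = next y₂ := congrArg (fun b => b.1.1) h
    have hx : x.1 ∉ S := x.2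
    by_cases h₁ : y₁.1 ∈ S <;> by_cases h₂ : y₂.1 ∈ S
    · exact hpar _ _ _ (hnE y₁ h₁) (h ▸ hnE y₂ h₂)
    · have e : y₁.1 = x := hpar _ _ _ (hnE y₁ h₁) (by rw [h, hny y₂ h₂]; exact y₂.2)
      exact absurd (e ▸ h₁) hx
    · have e : y₂.1 = x := hpar _ _ _ (hnE y₂ h₂) (by rw [← h, hny y₁ h₁]; exact y₁.2)
      exact absurd (e ▸ h₂) hx
    · rw [← hny y₁ h₁, ← hny y₂ h₂, h]
  · rintro ⟨b, h | ⟨z, hz, hxz, hzb⟩⟩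
    · exact ⟨⟨b, h⟩, Subtype.ext (Subtype.ext (hny _ b.2))⟩
    · exact ⟨⟨z, hxz⟩, Subtype.ext (Subtype.ext
        (eq_of_card_subtype_eq_one (hS z hz).2 (hnE _ hz) hzb))⟩

lemma indeg_suppress (hpar : ∀ a b y, E a y → E b y → a = b)
    (hS : ∀ z ∈ S, indeg E z = 1 ∧ outdeg E z = 1) (hSS : ∀ z ∈ S, ∀ y, E z y → y ∉ S)
    (x : ↥Sᶜ) : indeg (suppress E S) x = indeg E x := by
  have hx : x.1 ∉ S := x.2
  have : Subsingleton {a // E a x} := ⟨fun a b => Subtype.ext (hpar _ _ _ a.2 b.2)⟩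
  have : Subsingleton {a : ↥Sᶜ // suppress E S a x} := by
    refine ⟨fun ⟨a, ha⟩ ⟨b, hb⟩ => Subtype.ext (Subtype.ext ?_)⟩
    rcases ha with ha | ⟨z, hz, haz, hzx⟩ <;> rcases hb with hb | ⟨z', hz', hbz, hzx'⟩
    · exact hpar _ _ _ ha hb
    · exact absurd (hpar _ _ _ ha hzx' ▸ hz') a.2
    · exact absurd (hpar _ _ _ hb hzx ▸ hz) b.2
    · exact hpar _ _ _ haz (hpar _ _ _ hzx' hzx ▸ hbz)
  refine card_eq_of_subsingleton ⟨fun ⟨⟨a, ha⟩⟩ => ?_, fun ⟨⟨y, hy⟩⟩ => ?_⟩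
  · rcases ha with ha | ⟨z, -, -, hzx⟩
    exacts [⟨⟨a, ha⟩⟩, ⟨⟨z, hzx⟩⟩]
  · by_cases hyS : y ∈ S
    · obtain ⟨a, ha⟩ := exists_of_card_subtype_eq_one (hS y hyS).1
      exact ⟨⟨⟨a, fun haS => hSS a haS y ha hyS⟩, .inr ⟨y, hyS, ha, hy⟩⟩⟩
    · exact ⟨⟨⟨y, hyS⟩, .inl hy⟩⟩

end Suppress

section DisplayTree

variable {X : Type} {N : Net X} {u v : N.V}

def displayNet (N : Net X) (u v : N.V) (hlab : ∀ x, N.lab x ∉ ({u, v} : Set N.V)) : Net X where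
  V := ↥({u, v} : Set N.V)ᶜ
  fin := Fintype.ofFinite _
  E := suppress (deleteEdge N.E u v) {u, v}
  lab x := ⟨N.lab x, hlab x⟩

lemma lab_not_mem_pair (hN : N.valid) (hu : IsSplit N.E u) (hv : IsRetic N.E v) (x : X) :
    N.lab x ∉ ({u, v} : Set N.V) := by
  have := ((hN.leaf_iff _).mpr ⟨x, rfl⟩).2
  rintro (h | h) <;> rw [h] at this
  exacts [absurd hu.2 (by omega), absurd hv.2 (by omega)]

lemma deleteEdge_parent_unique (hN : N.valid) (h1 : reticCount N.E = 1) (hv : IsRetic N.E v)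
    (huv : N.E u v) (a b y : N.V) (ha : deleteEdge N.E u v a y) (hb : deleteEdge N.E u v b y) :
    a = b := by
  by_contra hab
  obtain rfl := (hN.isRetic_of_ne ha.1 hb.1 hab).eq_of_reticCount_eq_one h1 hv
  rcases eq_or_eq_of_card_subtype_eq_two hv.1 ha.1 hb.1 hab huv with rfl | rfl
  exacts [ha.2 rfl, hb.2 rfl]

lemma deleteEdge_degrees (hN : N.valid) (hv : IsRetic N.E v) (huv : N.E u v)
    (hu : IsSplit N.E u) (z : N.V) (hz : z ∈ ({u, v} : Set N.V)) :
    indeg (deleteEdge N.E u v) z = 1 ∧ outdeg (deleteEdge N.E u v) z = 1 := by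
  have hne : u ≠ v := hN.acyclic.ne_s7 huv
  rcases hz with rfl | rfl
  · rw [indeg_deleteEdge_of_ne hne, outdeg_deleteEdge huv, hu.1, hu.2]
    exact ⟨rfl, rfl⟩
  · rw [indeg_deleteEdge huv, outdeg_deleteEdge_of_ne hne.symm, hv.1, hv.2]
    exact ⟨rfl, rfl⟩

lemma deleteEdge_not_adj_pair (hN : N.valid) (huv : N.E u v) (z : N.V)
    (hz : z ∈ ({u, v} : Set N.V)) (y : N.V) (h : deleteEdge N.E u v z y) :
    y ∉ ({u, v} : Set N.V) := by
  rcases hz with rfl | rfl <;> rintro (rfl | rfl)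
  exacts [hN.acyclic.irrefl_s7 _ h.1, h.2 rfl, hN.acyclic.asymm_s7 huv h.1, hN.acyclic.irrefl_s7 _ h.1]

lemma isSubdivision_displayNet (hN : N.valid) (hv : IsRetic N.E v) (huv : N.E u v)
    (hu : IsSplit N.E u) (hlab : ∀ x, N.lab x ∉ ({u, v} : Set N.V)) :
    IsSubdivision (displayNet N u v hlab).E (deleteEdge N.E u v) Subtype.val :=
  isSubdivision_suppress (deleteEdge_degrees hN hv huv hu) (deleteEdge_not_adj_pair hN huv)

lemma displayNet_isTree (hN : N.valid) (h1 : reticCount N.E = 1) (hv : IsRetic N.E v)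
    (huv : N.E u v) (hu : IsSplit N.E u) (hlab : ∀ x, N.lab x ∉ ({u, v} : Set N.V)) :
    IsTree (displayNet N u v hlab) := by
  set T := displayNet N u v hlab
  have hx (x : T.V) : x.1 ≠ u ∧ x.1 ≠ v := by simpa [not_or] using x.2
  have hin (x : T.V) : indeg T.E x = indeg N.E x.1 :=
    (indeg_suppress (deleteEdge_parent_unique hN h1 hv huv) (deleteEdge_degrees hN hv huv hu)
      (deleteEdge_not_adj_pair hN huv) x).trans (indeg_deleteEdge_of_ne (hx x).2)
  have hout (x : T.V) : outdeg T.E x = outdeg N.E x.1 :=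
    (outdeg_suppress (deleteEdge_parent_unique hN h1 hv huv) (deleteEdge_degrees hN hv huv hu)
      (deleteEdge_not_adj_pair hN huv) x).trans (outdeg_deleteEdge_of_ne (hx x).1)
  have hroot (x : T.V) : IsRoot T.E x ↔ IsRoot N.E x.1 := by simp only [IsRoot, hin, hout]
  have hleaf (x : T.V) : IsLeafNode T.E x ↔ IsLeafNode N.E x.1 := by
    simp only [IsLeafNode, hin, hout]
  have hsplit (x : T.V) : IsSplit T.E x ↔ IsSplit N.E x.1 := by simp only [IsSplit, hin, hout]
  have hret (x : T.V) : IsRetic T.E x ↔ IsRetic N.E x.1 := by simp only [IsRetic, hin, hout]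
  obtain ⟨ρ, hρ, hρu⟩ := hN.root_unique
  have hρ' : ρ ∈ ({u, v} : Set N.V)ᶜ := by
    rintro (rfl | rfl) <;> simp only [IsRoot, IsSplit, IsRetic] at hρ hu hv <;> omega
  refine ⟨⟨(isSubdivision_displayNet hN hv huv hu hlab).acyclic (hN.acyclic.mono fun _ _ h => h.1),
    ⟨⟨ρ, hρ'⟩, (hroot _).2 hρ, fun y hy => Subtype.ext (hρu _ ((hroot y).1 hy))⟩,
    fun x y h => hN.lab_inj (congrArg Subtype.val h), fun x => ?_, fun x => ?_⟩, ?_⟩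
  · rw [hleaf, hN.leaf_iff]
    exact exists_congr fun y => ⟨fun h => Subtype.ext h, congrArg Subtype.val⟩
  · simpa only [hroot, hleaf, hsplit, hret] using hN.node_types x.1
  · exact Nat.card_eq_zero.mpr (.inl ⟨fun ⟨x, hx'⟩ =>
      (hx x).2 (((hret x).1 hx').eq_of_reticCount_eq_one h1 hv)⟩)

lemma displayNet_embeddedTree (hN : N.valid) (h1 : reticCount N.E = 1) (hv : IsRetic N.E v)
    (huv : N.E u v) (hu : IsSplit N.E u) (hlab : ∀ x, N.lab x ∉ ({u, v} : Set N.V)) :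
    EmbeddedTree (displayNet N u v hlab) N :=
  ⟨displayNet_isTree hN h1 hv huv hu hlab, deleteEdge N.E u v, Subtype.val, fun _ _ h => h.1,
    isSubdivision_displayNet hN hv huv hu hlab, fun _ => rfl⟩

end DisplayTree

section Classification

variable {X : Type} {N T : Net X} {u v p : N.V}

lemma not_isRetic_of_isSubdivision (hN : N.valid) (hT : IsTree T) {φ : T.V → N.V}
    (hs : IsSubdivision T.E N.E φ) (v : N.V) : ¬ IsRetic N.E v := by
  intro hv
  have hrange y : y ∈ Set.range φ := (hs.mem_range_iff hN.acyclic
    hT.1.not_indeg_eq_one_and_outdeg_eq_one y).mpr (hN.not_indeg_eq_one_and_outdeg_eq_one y)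
  obtain ⟨x, y, hxy, -⟩ := Nat.card_eq_two_iff.mp hv.1
  obtain ⟨c, hc⟩ := hrange v
  obtain ⟨a, ha⟩ := hrange x
  obtain ⟨b, hb⟩ := hrange y
  have hF (d : T.V) (z : {z // N.E z v}) (hd : φ d = z) : T.E d c :=
    (hs.adj_iff d c).mpr (.single (by rw [hd, hc]; exact z.2))
  have hab : a ≠ b := fun h => hxy (Subtype.ext (by rw [← ha, ← hb, h]))
  exact (card_subtype_pos (P := IsRetic T.E) (hT.1.isRetic_of_ne (hF a x ha) (hF b y hb) hab)).ne'
    hT.2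

lemma eq_deleteEdge_of_isSubdivision (hN : N.valid) (h1 : reticCount N.E = 1) (huv : N.E u v)
    (hpv : N.E p v) (hup : u ≠ p) (hT : IsTree T) {E' : N.V → N.V → Prop} {φ : T.V → N.V}
    (hsub : ∀ a b, E' a b → N.E a b) (hs : IsSubdivision T.E E' φ) :
    E' = deleteEdge N.E u v ∨ E' = deleteEdge N.E p v := by
  have hv : IsRetic N.E v := hN.isRetic_of_ne huv hpv hup
  have hpar z (hz : N.E z v) : z = u ∨ z = p := eq_or_eq_of_card_subtype_eq_two hv.1 huv hpv hup hz
  obtain ⟨ρ, hρ, -⟩ := hN.root_unique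
  have hρ' z : ¬ N.E z ρ := fun h => (card_subtype_pos (P := (N.E · ρ)) h).ne' hρ.1
  have hroot y (hy : ∀ z, ¬ E' z y) : y = ρ :=
    hs.eq_of_forall_not_adj hT.1 hy fun z h => hρ' z (hsub _ _ h)
  -- Dropping the only edge into `y` would make `y` a second root of the subdivision.
  have hkeep x y (h : N.E x y) (hy : y ≠ v) : E' x y := by
    by_contra hxy
    have : y = ρ := hroot y fun z hz => by
      obtain rfl : z = x := by_contra fun hzx =>
        hy ((hN.isRetic_of_ne (hsub _ _ hz) h hzx).eq_of_reticCount_eq_one h1 hv)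
      exact hxy hz
    exact hρ' x (this ▸ h)
  have hswitch w w' (hw : ¬ E' w v) (hw' : E' w' v) (hpar' : ∀ z, N.E z v → z = w ∨ z = w') :
      E' = deleteEdge N.E w v := by
    ext x y
    refine ⟨fun h => ⟨hsub _ _ h, by rintro ⟨⟩; exact hw h⟩, fun ⟨h, hne⟩ => ?_⟩
    by_cases hy : y = v
    · subst hy
      rcases hpar' x h with rfl | rfl
      exacts [absurd rfl hne, hw']
    · exact hkeep x y h hy
  by_cases hu' : E' u v <;> by_cases hp' : E' p v
  · refine absurd (?_ : E' = N.E) fun hE => not_isRetic_of_isSubdivision hN hT (hE ▸ hs) v hv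
    ext x y
    refine ⟨hsub x y, fun h => ?_⟩
    by_cases hy : y = v
    · subst hy
      rcases hpar x h with rfl | rfl <;> assumption
    · exact hkeep x y h hy
  · exact .inr (hswitch p u hp' hu' fun z hz => (hpar z hz).symm)
  · exact .inl (hswitch u p hu' hp' hpar)
  · have : v = ρ := hroot v fun z hz => by
      rcases hpar z (hsub _ _ hz) with rfl | rfl
      exacts [hu' hz, hp' hz]
    exact absurd (this ▸ huv) (hρ' u)

end Classification

section Triangle

variable {X : Type} {N : Net X} {t s v : N.V}

lemma exists_triangle_over_retic (hN : N.valid) (h1 : reticCount N.E = 1) (hΔ : HasTriangle N.E)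
    (hv : IsRetic N.E v) :
    ∃ t s, N.E t s ∧ N.E t v ∧ N.E s v ∧ IsSplit N.E t ∧ IsSplit N.E s := by
  obtain ⟨t, s, r, hts, htr, hsr⟩ := hΔ
  have hr := hN.isRetic_of_ne htr hsr (hN.acyclic.ne_s7 hts)
  obtain rfl := hr.eq_of_reticCount_eq_one h1 hv
  refine ⟨t, s, hts, htr, hsr, hN.isSplit_of_ne hts htr (hN.acyclic.ne_s7 hsr),
    hN.isSplit_of_not_isRetic hts hsr fun hs => ?_⟩
  exact hN.acyclic.ne_s7 hsr (hs.eq_of_reticCount_eq_one h1 hr)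

lemma isSplit_of_hasTriangle (hN : N.valid) (h1 : reticCount N.E = 1) (hΔ : HasTriangle N.E)
    {u : N.V} (hv : IsRetic N.E v) (huv : N.E u v) : IsSplit N.E u := by
  obtain ⟨t, s, hts, htv, hsv, ht, hs⟩ := exists_triangle_over_retic hN h1 hΔ hv
  rcases eq_or_eq_of_card_subtype_eq_two hv.1 htv hsv (hN.acyclic.ne_s7 hts) huv with rfl | rfl
  exacts [ht, hs]

/-- The isomorphism swaps `t` and `s`. -/
lemma displayNet_netIso_of_triangle (hN : N.valid) (hv : IsRetic N.E v) (hts : N.E t s)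
    (htv : N.E t v) (hsv : N.E s v) (ht : IsSplit N.E t) (hs : IsSplit N.E s)
    (hlt : ∀ x, N.lab x ∉ ({t, v} : Set N.V)) (hls : ∀ x, N.lab x ∉ ({s, v} : Set N.V)) :
    NetIso (displayNet N t v hlt) (displayNet N s v hls) := by
  classical
  have hac := hN.acyclic
  obtain ⟨c, hvc⟩ := exists_of_card_subtype_eq_one hv.2
  have hchild b (h : N.E v b) : b = c := eq_of_card_subtype_eq_one hv.2 h hvc
  have hpar a (h : N.E a v) : a = t ∨ a = s :=
    eq_or_eq_of_card_subtype_eq_two hv.1 htv hsv (hac.ne_s7 hts) h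
  have htchild b (h : N.E t b) : b = v ∨ b = s :=
    eq_or_eq_of_card_subtype_eq_two ht.2 htv hts (hac.ne_s7 hsv).symm h
  have hspar a (h : N.E a s) : a = t := eq_of_card_subtype_eq_one hs.1 h hts
  have hirr := hac.irrefl_s7
  have hst := hac.asymm_s7 hts
  have hvt := hac.asymm_s7 htv
  have hvs := hac.asymm_s7 hsv
  have hcs : c ≠ s := fun h => hvs (h ▸ hvc)
  have hmem x : x ∈ ({t, v} : Set N.V)ᶜ ↔ Equiv.swap t s x ∈ ({s, v} : Set N.V)ᶜ := by
    have := hac.ne_s7 htv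
    have := hac.ne_s7 hsv
    simp only [Set.mem_compl_iff, Set.mem_insert_iff, Set.mem_singleton_iff, Equiv.swap_apply_def]
    split_ifs <;> grind
  refine ⟨(Equiv.swap t s).subtypeEquiv hmem, fun a b => ?_, fun x => ?_⟩
  · obtain ⟨a, ha⟩ := a
    obtain ⟨b, hb⟩ := b
    change suppress _ _ ⟨a, ha⟩ ⟨b, hb⟩ ↔
      suppress _ _ ⟨Equiv.swap t s a, (hmem a).1 ha⟩ ⟨Equiv.swap t s b, (hmem b).1 hb⟩
    simp only [Set.mem_compl_iff, Set.mem_insert_iff, Set.mem_singleton_iff, not_or] at ha hb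
    simp only [suppress, deleteEdge, Set.mem_insert_iff,
      Set.mem_singleton_iff, exists_eq_or_imp, exists_eq_left, ne_eq, Prod.mk.injEq,
      Equiv.swap_apply_def]
    grind
  · have h₁ := hlt x
    have h₂ := hls x
    simp only [Set.mem_insert_iff, Set.mem_singleton_iff, not_or] at h₁ h₂
    exact Subtype.ext (Equiv.swap_apply_of_ne_of_ne h₁.1 h₂.1)

end Triangle

section Uniqueness

variable {X : Type} {N T : Net X} {u v : N.V}

lemma netIso_displayNet_of_hasTriangle (hN : N.valid) (h1 : reticCount N.E = 1)
    (hΔ : HasTriangle N.E) (hv : IsRetic N.E v) (huv : N.E u v)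
    (hlab : ∀ x, N.lab x ∉ ({u, v} : Set N.V)) (hT : EmbeddedTree T N) :
    NetIso T (displayNet N u v hlab) := by
  obtain ⟨t, s, hts, htv, hsv, ht, hs⟩ := exists_triangle_over_retic hN h1 hΔ hv
  have hlt := lab_not_mem_pair hN ht hv
  have hls := lab_not_mem_pair hN hs hv
  have hswap := displayNet_netIso_of_triangle hN hv hts htv hsv ht hs hlt hls
  have hTt : NetIso T (displayNet N t v hlt) := by
    obtain ⟨hT, E', φ, hsub, hφ, hl⟩ := hT
    have hac : Acyclic E' := hN.acyclic.mono hsub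
    rcases eq_deleteEdge_of_isSubdivision hN h1 htv hsv (hN.acyclic.ne_s7 hts) hT hsub hφ with
      rfl | rfl
    · exact netIso_of_isSubdivision hT.1 (displayNet_isTree hN h1 hv htv ht hlt).1 hac hφ
        (isSubdivision_displayNet hN hv htv ht hlt) hl fun _ => rfl
    · exact (netIso_of_isSubdivision hT.1 (displayNet_isTree hN h1 hv hsv hs hls).1 hac hφ
        (isSubdivision_displayNet hN hv hsv hs hls) hl fun _ => rfl).trans hswap.symm
  rcases eq_or_eq_of_card_subtype_eq_two hv.1 htv hsv (hN.acyclic.ne_s7 hts) huv with rfl | rfl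
  exacts [hTt, hTt.trans hswap]

end Uniqueness

section HeadMove

variable {X : Type} {M : Net X} {u v p c s t : M.V}

def headMoveNet (M : Net X) (u v p c s t : M.V) : Net X :=
  ⟨M.V, M.fin, headMoveEdges M.E u v p c s t, M.lab⟩

lemma isRetic_headMoveNet (hM : M.valid) (hv : IsRetic M.E v) (hpv : M.E p v)
    (hvc : M.E v c) (hM₀ : (headMoveNet M u v p c s t).valid) :
    IsRetic (headMoveNet M u v p c s t).E v := by
  have hirr := hM₀.acyclic.irrefl_s7
  have hchild b (h : M.E v b) : b = c := eq_of_card_subtype_eq_one hv.2 h hvc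
  have hpv' := hM.acyclic.ne_s7 hpv
  refine hM₀.isRetic_of_outdeg_eq_one (a := u) (.inr (.inr (.inr (.inr rfl))))
    (card_subtype_eq_one (a := t) (.inr (.inr (.inr (.inl rfl)))) fun b hb => ?_)
  have := hirr v
  simp only [headMoveNet, headMoveEdges, ne_eq, Prod.mk.injEq] at hb this
  grind

lemma headMove_ends_ne (hM : M.valid) (hv : IsRetic M.E v) (huv : M.E u v) (hpv : M.E p v)
    (hup : u ≠ p) (hvc : M.E v c) (hM₀ : (headMoveNet M u v p c s t).valid) :
    s ≠ u ∧ s ≠ v ∧ t ≠ u ∧ t ≠ v := by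
  set H := (headMoveNet M u v p c s t).E
  have huv₀ : H u v := .inr (.inr (.inr (.inr rfl)))
  have hsv₀ : H s v := .inr (.inr (.inl rfl))
  have hvt₀ : H v t := .inr (.inr (.inr (.inl rfl)))
  have hac := hM₀.acyclic
  refine ⟨fun hsu => ?_, hac.ne_s7 hsv₀, fun htu => hac.asymm_s7 huv₀ (by rwa [htu] at hvt₀),
    (hac.ne_s7 hvt₀).symm⟩
  have hpar a (h : M.E a v) : a = u ∨ a = p := eq_or_eq_of_card_subtype_eq_two hv.1 huv hpv hup h
  have hcv := hM.acyclic.ne_s7 hvc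
  have htv := hac.ne_s7 hvt₀
  have h2 : indeg H v = 2 := (isRetic_headMoveNet hM hv hpv hvc hM₀).1
  have h1 : indeg H v = 1 := card_subtype_eq_one huv₀ fun a ha => ?_
  · omega
  · simp only [H, headMoveNet, headMoveEdges, ne_eq] at ha
    grind

lemma displayNet_headMoveNet (hM : M.valid) (hv : IsRetic M.E v) (huv : M.E u v) (hpv : M.E p v)
    (hup : u ≠ p) (hvc : M.E v c) (hst : M.E s t) (hM₀ : (headMoveNet M u v p c s t).valid)
    (hlab : ∀ x, M.lab x ∉ ({u, v} : Set M.V)) :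
    NetIso (displayNet M u v hlab) (displayNet (headMoveNet M u v p c s t) u v hlab) := by
  obtain ⟨hsu, hsv, htu, htv⟩ := headMove_ends_ne hM hv huv hpv hup hvc hM₀
  have hpar a (h : M.E a v) : a = u ∨ a = p := eq_or_eq_of_card_subtype_eq_two hv.1 huv hpv hup h
  have hchild b (h : M.E v b) : b = c := eq_of_card_subtype_eq_one hv.2 h hvc
  have hac := hM.acyclic
  have huv' := hac.ne_s7 huv
  have hpv' := hac.ne_s7 hpv
  have hcv := (hac.ne_s7 hvc).symm
  have hcu : c ≠ u := fun h => hac.asymm_s7 huv (h ▸ hvc)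
  refine ⟨Equiv.refl _, fun ⟨a, ha⟩ ⟨b, hb⟩ => ?_, fun _ => rfl⟩
  change suppress _ _ ⟨a, ha⟩ ⟨b, hb⟩ ↔ suppress _ _ ⟨a, ha⟩ ⟨b, hb⟩
  simp only [Set.mem_compl_iff, Set.mem_insert_iff, Set.mem_singleton_iff, not_or] at ha hb
  simp only [headMoveNet, suppress, deleteEdge, headMoveEdges,
    Set.mem_insert_iff, Set.mem_singleton_iff, exists_eq_or_imp, exists_eq_left, ne_eq,
    Prod.mk.injEq]
  grind

end HeadMove

/-- if tier-1 networks `M` and `M'` each contain a triangle and `M'` is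
obtained from `M` by a single head move, then `M` and `M'` have the same unique
embedded tree. -/
theorem tier1_triangle_head_move_same_tree {X : Type} (M M' : Net X)
    (h1 : reticCount M.E = 1) (h1' : reticCount M'.E = 1)
    (hΔ : HasTriangle M.E) (hΔ' : HasTriangle M'.E)
    (h : HeadMoveStep M M') :
    ∃ T : Net X, EmbeddedTree T M ∧ EmbeddedTree T M' ∧
      ∀ T' : Net X, (EmbeddedTree T' M ∨ EmbeddedTree T' M') → NetIso T' T := by
  obtain ⟨hM, hM', u, v, p, c, s, t, huv, hpv, hpu, hvc, hst, hiso⟩ := h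
  set M₀ := headMoveNet M u v p c s t
  have hiso : NetIso M₀ M' := hiso
  have hM₀ : M₀.valid := LabIso.isPhyloNet hiso.symm hM'
  have h1₀ : reticCount M₀.E = 1 := (LabIso.reticCount_eq hiso).symm.trans h1'
  have hΔ₀ : HasTriangle M₀.E := LabIso.hasTriangle hiso.symm hΔ'
  have hv : IsRetic M.E v := hM.isRetic_of_ne huv hpv hpu.symm
  have hv₀ : IsRetic M₀.E v := isRetic_headMoveNet hM hv hpv hvc hM₀
  have huv₀ : M₀.E u v := .inr (.inr (.inr (.inr rfl)))
  have hu := isSplit_of_hasTriangle hM h1 hΔ hv huv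
  have hlab := lab_not_mem_pair hM hu hv
  have hT := displayNet_headMoveNet hM hv huv hpv hpu.symm hvc hst hM₀ hlab
  refine ⟨displayNet M u v hlab, displayNet_embeddedTree hM h1 hv huv hu hlab, ?_, ?_⟩
  · exact hT.trans_embeddedTree ((displayNet_embeddedTree hM₀ h1₀ hv₀ huv₀
      (isSplit_of_hasTriangle hM₀ h1₀ hΔ₀ hv₀ huv₀) hlab).trans_netIso hiso)
  · rintro T' (hT' | hT')
    · exact netIso_displayNet_of_hasTriangle hM h1 hΔ hv huv hlab hT'
    · exact (netIso_displayNet_of_hasTriangle hM₀ h1₀ hΔ₀ hv₀ huv₀ hlab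
        (hT'.trans_netIso hiso.symm)).trans hT.symm

end Phylo
end
end
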